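/- arXiv:0704.1415 — 3 statements merged into one kernel-verified Lean document; each statement's English description precedes it below -/
import Mathlib

section
/- Let X be a random variable with the gamma density g_α(x) = x^{α−1} e^{−x}/Γ(α) on (0,∞), α > 0. Then for every t > 0 the Laplace transform of X² is given by the convergent series E[ e^{−t X²} ] = (2Γ(α))^{−1} Σ_{k=0}^∞ (−1)^k (Γ((α+k)/2)/k!) · t^{−(α+k)/2}. -/
/-!
Expand the factor `e^{-x}` of the gamma density in its exponential series. Termwise
integration is legitimate because the series of absolute values sums to
`x^{α-1} e^{x - t x²} / Γ(α)`, which is integrable on `(0, ∞)` since the Gaussian factor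
dominates `e^x`. The `k`-th term is then a Gaussian moment,
`∫₀^∞ x^{s-1} e^{-t x²} dx = Γ(s/2) t^{-s/2} / 2` with `s = α + k`.
-/

open MeasureTheory ProbabilityTheory Real Set
open scoped Nat

theorem integral_rpow_sub_one_mul_exp_neg_mul_sq {b s : ℝ} (hb : 0 < b) (hs : 0 < s) :
    ∫ x in Ioi (0 : ℝ), x ^ (s - 1) * exp (-b * x ^ 2) =
      b ^ (-s / 2) * (1 / 2) * Gamma (s / 2) := by
  simp_rw [← rpow_two]
  simpa using integral_rpow_mul_exp_neg_mul_rpow two_pos (by linarith : -1 < s - 1) hb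

theorem integrableOn_rpow_mul_exp_neg_mul_sq_add_mul {b s : ℝ} (hb : 0 < b) (hs : -1 < s)
    (c : ℝ) : IntegrableOn (fun x : ℝ => x ^ s * exp (-b * x ^ 2 + c * x)) (Ioi 0) := by
  refine ((integrableOn_rpow_mul_exp_neg_mul_sq (half_pos hb) hs).const_mul
    (exp (c ^ 2 / (2 * b)))).mono' (by fun_prop) ?_
  filter_upwards [ae_restrict_mem measurableSet_Ioi] with x (hx : 0 < x)
  have hcx : -b * x ^ 2 + c * x ≤ c ^ 2 / (2 * b) + -(b / 2) * x ^ 2 := by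
    have h := mul_nonneg (half_pos hb).le (sq_nonneg (x - c / b))
    have : b / 2 * (x - c / b) ^ 2 = b / 2 * x ^ 2 - c * x + c ^ 2 / (2 * b) := by
      field_simp; ring
    linarith
  rw [norm_of_nonneg (by positivity), mul_left_comm, ← exp_add]
  exact mul_le_mul_of_nonneg_left (exp_le_exp.mpr hcx) (by positivity)

theorem integral_gammaMeasure {a r : ℝ} (ha : 0 < a) (hr : 0 < r) (f : ℝ → ℝ) :
    ∫ x, f x ∂gammaMeasure a r =
      ∫ x in Ioi 0, r ^ a / Gamma a * x ^ (a - 1) * exp (-(r * x)) * f x := by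
  rw [gammaMeasure, integral_withDensity_eq_integral_toReal_smul (f := gammaPDF a r)
    (measurable_gammaPDFReal a r).ennreal_ofReal (ae_of_all _ fun _ => ENNReal.ofReal_lt_top),
    ← integral_Ici_eq_integral_Ioi,
    ← setIntegral_eq_integral_of_forall_compl_eq_zero (s := Ici 0)]
  · refine setIntegral_congr_fun measurableSet_Ici fun x (hx : 0 ≤ x) => ?_
    rw [gammaPDF, ENNReal.toReal_ofReal (gammaPDFReal_nonneg ha hr x), gammaPDFReal, if_pos hx,
      smul_eq_mul]
  · intro x (hx : ¬ 0 ≤ x)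
    rw [gammaPDF, gammaPDFReal, if_neg hx, ENNReal.ofReal_zero, ENNReal.toReal_zero, zero_smul]

theorem hasSum_integral_mul_pow_div_factorial {Ω : Type*} [MeasurableSpace Ω] {μ : Measure Ω}
    {w g : Ω → ℝ} (hw : AEStronglyMeasurable w μ) (hg : AEStronglyMeasurable g μ)
    (hdom : Integrable (fun x => |w x| * exp |g x|) μ) :
    HasSum (fun k : ℕ => ∫ x, w x * (g x ^ k / k !) ∂μ) (∫ x, w x * exp (g x) ∂μ) := by
  have hnorm (k : ℕ) (x : Ω) : ‖w x * (g x ^ k / k !)‖ = |w x| * (|g x| ^ k / k !) := by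
    rw [norm_mul, norm_div, norm_pow, Real.norm_eq_abs, Real.norm_eq_abs, Real.norm_natCast]
  have hint (k : ℕ) : Integrable (fun x => w x * (g x ^ k / k !)) μ :=
    hdom.mono' (by fun_prop) <| ae_of_all _ fun x => by
      rw [hnorm]
      exact mul_le_mul_of_nonneg_left (pow_div_factorial_le_exp _ (abs_nonneg _) k) (abs_nonneg _)
  have hsum : Summable fun k : ℕ => ∫ x, ‖w x * (g x ^ k / k !)‖ ∂μ := by
    refine summable_of_sum_range_le (c := ∫ x, |w x| * exp |g x| ∂μ)
      (fun k => integral_nonneg fun x => norm_nonneg _) fun n => ?_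
    rw [← integral_finsetSum _ fun k _ => (hint k).norm]
    refine integral_mono (integrable_finsetSum _ fun k _ => (hint k).norm) hdom fun x => ?_
    simp only [hnorm, ← Finset.mul_sum]
    exact mul_le_mul_of_nonneg_left (sum_le_exp_of_nonneg (abs_nonneg _) n) (abs_nonneg _)
  have hseries (x : Ω) : ∑' k : ℕ, w x * (g x ^ k / k !) = w x * exp (g x) := by
    rw [tsum_mul_left, exp_eq_exp_ℝ, (NormedSpace.expSeries_div_hasSum_exp (g x)).tsum_eq]
  simpa only [hseries] using hasSum_integral_of_summable_integral_norm hint hsum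

theorem laplace_transform_sq_gamma_series_general
    {Ω : Type*} [MeasureSpace Ω]
    (α : ℝ) (hα : 0 < α)
    (X : Ω → ℝ) (hmeas : Measurable X)
    (hdist : Measure.map X ℙ = gammaMeasure α 1)
    (t : ℝ) (ht : 0 < t) :
    HasSum
      (fun k : ℕ =>
        (2 * Real.Gamma α)⁻¹ * ((-1) ^ k * (Real.Gamma ((α + k) / 2) / k.factorial)
          * t ^ (-(α + k) / 2)))
      (∫ ω, Real.exp (-t * (X ω) ^ 2) ∂ℙ) := by
  set w : ℝ → ℝ := fun x => (Gamma α)⁻¹ * x ^ (α - 1) * exp (-t * x ^ 2) with hw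
  have hlaw : ∫ ω, exp (-t * X ω ^ 2) ∂ℙ = ∫ x in Ioi 0, w x * exp (-x) := by
    rw [← integral_map (f := fun x => exp (-t * x ^ 2)) hmeas.aemeasurable
      (by fun_prop : Continuous _).aestronglyMeasurable, hdist, integral_gammaMeasure hα one_pos]
    refine setIntegral_congr_fun measurableSet_Ioi fun x _ => ?_
    simp only [hw, one_rpow, div_eq_inv_mul, one_mul, mul_one]
    ring
  have hdom : IntegrableOn (fun x => |w x| * exp |-x|) (Ioi 0) := by
    refine IntegrableOn.congr_fun ((integrableOn_rpow_mul_exp_neg_mul_sq_add_mul ht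
      (by linarith : -1 < α - 1) 1).const_mul (Gamma α)⁻¹) (fun x (hx : 0 < x) => ?_)
      measurableSet_Ioi
    rw [abs_neg, abs_of_pos hx, abs_of_nonneg (by positivity), one_mul, exp_add]
    ring
  have hterm (k : ℕ) : ∫ x in Ioi 0, w x * ((-x) ^ k / k !) = (2 * Gamma α)⁻¹ *
      ((-1) ^ k * (Gamma ((α + k) / 2) / k !) * t ^ (-(α + k) / 2)) := by
    calc ∫ x in Ioi 0, w x * ((-x) ^ k / k !)
        = ∫ x in Ioi 0, (-1) ^ k / k ! / Gamma α * (x ^ (α + k - 1) * exp (-t * x ^ 2)) := by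
          refine setIntegral_congr_fun measurableSet_Ioi fun x (hx : 0 < x) => ?_
          rw [hw, add_sub_right_comm, rpow_add_natCast hx.ne', neg_pow]
          field_simp
      _ = _ := by
          rw [integral_const_mul, integral_rpow_sub_one_mul_exp_neg_mul_sq ht (by positivity)]
          field_simp
  rw [hlaw]
  simpa only [hterm] using hasSum_integral_mul_pow_div_factorial (by fun_prop) (by fun_prop) hdom

/-- For a random variable `X` with gamma density
`g_α(x) = x^(α-1) e^(-x)/Γ(α)` on `(0,∞)`, `α > 0`, the Laplace transform of `X²` is,
for every `t > 0`, the sum of the convergent series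
`E[e^(-t X²)] = (2Γ(α))⁻¹ ∑_{k=0}^∞ (-1)^k (Γ((α+k)/2)/k!) t^(-(α+k)/2)`. -/
theorem laplace_transform_sq_gamma_series
    {Ω : Type*} [MeasureSpace Ω] [IsProbabilityMeasure (ℙ : Measure Ω)]
    (α : ℝ) (hα : 0 < α)
    (X : Ω → ℝ) (hmeas : Measurable X)
    (hdist : Measure.map X ℙ = gammaMeasure α 1)
    (t : ℝ) (ht : 0 < t) :
    HasSum
      (fun k : ℕ =>
        (2 * Real.Gamma α)⁻¹ * ((-1) ^ k * (Real.Gamma ((α + k) / 2) / k.factorial)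
          * t ^ (-(α + k) / 2)))
      (∫ ω, Real.exp (-t * (X ω) ^ 2) ∂ℙ) :=
  laplace_transform_sq_gamma_series_general α hα X hmeas hdist t ht
end

section
/- For every integer k ≥ 0, E[ (Z/Y²)^k ] = (Γ(αn) · k! / Γ(αn + 2k)) · Σ_{k_1+⋯+k_n=k} Π_{i=1}^n Γ(α + 2k_i)/(Γ(α) k_i!), where the sum runs over all n-tuples of nonnegative integers with sum k. -/
open MeasureTheory ProbabilityTheory Real

/-!
For `y > 0` one has `Γ(2k) y⁻²ᵏ = ∫₀^∞ t^(2k-1) e^(-ty) dt`, so by Tonelli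
`Γ(2k) E[(Z/Y²)^k] = ∫₀^∞ t^(2k-1) E[Z^k e^(-tY)] dt`. Expanding `Z^k` by the multinomial
theorem and using independence, `E[Z^k e^(-tY)]` is a sum of products of tilted gamma moments
`E[X^(2m) e^(-tX)] = Γ(α+2m)/Γ(α) · (1+t)^(-(α+2m))`; it equals `k! (1+t)^(-(αn+2k)) S`, where
`S` is the sum in the statement. What is left is the beta integral
`∫₀^∞ t^(2k-1) (1+t)^(-(2k+αn)) dt = Γ(2k) Γ(αn) / Γ(αn+2k)`.
-/

open Set Finset
open scoped ENNReal Nat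

lemma lintegral_rpow_mul_exp_neg_mul_Ioi {a r : ℝ} (ha : 0 < a) (hr : 0 < r) :
    ∫⁻ t in Ioi 0, ENNReal.ofReal (t ^ (a - 1) * exp (-(r * t)))
      = ENNReal.ofReal ((1 / r) ^ a * Gamma a) := by
  rw [← integral_rpow_mul_exp_neg_mul_Ioi ha hr, ofReal_integral_eq_lintegral_ofReal]
  · simpa [rpow_one] using
      (integrableOn_rpow_mul_exp_neg_mul_rpow (s := a - 1) (by linarith) one_pos hr).integrable
  · filter_upwards [ae_restrict_mem measurableSet_Ioi] with t (ht : 0 < t)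
    positivity

lemma lintegral_rpow_mul_one_div_one_add_rpow_Ioi {a b : ℝ} (ha : 0 < a) (hb : 0 < b) :
    ∫⁻ t in Ioi 0, ENNReal.ofReal (t ^ (a - 1) * (1 / (1 + t)) ^ (a + b))
      = ENNReal.ofReal (Gamma a * Gamma b / Gamma (a + b)) := by
  have hab : 0 < a + b := by linarith
  set F : ℝ → ℝ → ℝ≥0∞ := fun t x ↦
    ENNReal.ofReal (t ^ (a - 1) * (x ^ (a + b - 1) * exp (-((1 + t) * x))))
  have integrate_x_first : ∫⁻ t in Ioi 0, ∫⁻ x in Ioi 0, F t x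
      = (∫⁻ t in Ioi 0, ENNReal.ofReal (t ^ (a - 1) * (1 / (1 + t)) ^ (a + b)))
          * ENNReal.ofReal (Gamma (a + b)) := by
    rw [← lintegral_mul_const' _ _ ENNReal.ofReal_ne_top]
    refine setLIntegral_congr_fun measurableSet_Ioi fun t (ht : 0 < t) ↦ ?_
    simp only [F, ENNReal.ofReal_mul (rpow_nonneg ht.le _)]
    rw [lintegral_const_mul' _ _ ENNReal.ofReal_ne_top,
      lintegral_rpow_mul_exp_neg_mul_Ioi hab (by linarith), ENNReal.ofReal_mul (by positivity),
      mul_assoc]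
  have integrate_t_first : ∫⁻ t in Ioi 0, ∫⁻ x in Ioi 0, F t x
      = ENNReal.ofReal (Gamma a * Gamma b) := by
    rw [lintegral_lintegral_swap (by fun_prop)]
    calc ∫⁻ x in Ioi 0, ∫⁻ t in Ioi 0, F t x
        = ∫⁻ x in Ioi 0,
            ENNReal.ofReal (Gamma a) * ENNReal.ofReal (x ^ (b - 1) * exp (-(1 * x))) := by
          refine setLIntegral_congr_fun measurableSet_Ioi fun x (hx : 0 < x) ↦ ?_
          have hF : ∀ t, F t x = ENNReal.ofReal (x ^ (a + b - 1) * exp (-x))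
              * ENNReal.ofReal (t ^ (a - 1) * exp (-(x * t))) := fun t ↦ by
            rw [← ENNReal.ofReal_mul (by positivity)]
            simp only [F]
            congr 1
            rw [show -((1 + t) * x) = -x + -(x * t) by ring, exp_add]
            ring
          simp only [hF]
          rw [lintegral_const_mul' _ _ ENNReal.ofReal_ne_top,
            lintegral_rpow_mul_exp_neg_mul_Ioi ha hx, ← ENNReal.ofReal_mul (by positivity),
            ← ENNReal.ofReal_mul (Gamma_pos_of_pos ha).le]
          congr 1
          rw [one_div, inv_rpow hx.le, one_mul, show a + b - 1 = (b - 1) + a by ring,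
            rpow_add hx]
          field_simp
      _ = ENNReal.ofReal (Gamma a * Gamma b) := by
          rw [lintegral_const_mul' _ _ ENNReal.ofReal_ne_top,
            lintegral_rpow_mul_exp_neg_mul_Ioi hb one_pos, div_one, one_rpow, one_mul,
            ← ENNReal.ofReal_mul (Gamma_pos_of_pos ha).le]
  have hΓ : 0 < Gamma (a + b) := Gamma_pos_of_pos hab
  rw [ENNReal.ofReal_div_of_pos hΓ, ENNReal.eq_div_iff (by simpa using hΓ) ENNReal.ofReal_ne_top,
    mul_comm, ← integrate_x_first, integrate_t_first]

lemma ofReal_Gamma_mul_ofReal_div_sq_pow_eq_lintegral {y z : ℝ} (hy : 0 < y) (hz : 0 ≤ z)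
    {k : ℕ} (hk : 0 < k) :
    ENNReal.ofReal (Gamma (2 * k)) * ENNReal.ofReal ((z / y ^ 2) ^ k)
      = ∫⁻ t in Ioi 0, ENNReal.ofReal (t ^ (2 * k - 1 : ℝ) * (z ^ k * exp (-(t * y)))) := by
  have hz_pow : 0 ≤ z ^ k := pow_nonneg hz k
  calc ENNReal.ofReal (Gamma (2 * k)) * ENNReal.ofReal ((z / y ^ 2) ^ k)
      = ENNReal.ofReal (z ^ k) * ENNReal.ofReal ((1 / y) ^ (2 * k : ℝ) * Gamma (2 * k)) := by
        rw [← ENNReal.ofReal_mul (Gamma_pos_of_pos (by positivity)).le,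
          ← ENNReal.ofReal_mul hz_pow]
        congr 1
        rw [show (2 * k : ℝ) = (2 * k : ℕ) by push_cast; ring, rpow_natCast, div_pow, pow_mul,
          one_div_pow]
        ring
    _ = _ := by
        rw [← lintegral_rpow_mul_exp_neg_mul_Ioi (by positivity) hy,
          ← lintegral_const_mul' _ _ ENNReal.ofReal_ne_top]
        refine lintegral_congr fun t ↦ ?_
        rw [← ENNReal.ofReal_mul hz_pow, mul_comm y]
        congr 1
        ring

lemma ae_pos_gammaMeasure (a r : ℝ) : ∀ᵐ x ∂gammaMeasure a r, 0 < x := by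
  have h : gammaMeasure a r (Iic 0) = 0 := by
    rw [gammaMeasure, withDensity_apply _ measurableSet_Iic,
      ← Measure.restrict_congr_set Iio_ae_eq_Iic, lintegral_gammaPDF_of_nonpos le_rfl]
  simpa [ae_iff, not_lt, Iic_def] using h

lemma lintegral_pow_mul_exp_neg_mul_gammaMeasure {a r t : ℝ} (ha : 0 < a) (hr : 0 < r)
    (ht : 0 ≤ t) (m : ℕ) :
    ∫⁻ x, ENNReal.ofReal (x ^ m * exp (-(t * x))) ∂gammaMeasure a r
      = ENNReal.ofReal (r ^ a / Gamma a * ((1 / (r + t)) ^ (a + m) * Gamma (a + m))) := by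
  rw [← Measure.restrict_eq_self_of_ae_mem (s := Ioi 0) (ae_pos_gammaMeasure a r), gammaMeasure,
    restrict_withDensity measurableSet_Ioi,
    lintegral_withDensity_eq_lintegral_mul (f := gammaPDF a r) _
      (measurable_gammaPDFReal a r).ennreal_ofReal (by fun_prop),
    ENNReal.ofReal_mul (by positivity),
    ← lintegral_rpow_mul_exp_neg_mul_Ioi (by positivity) (by linarith),
    ← lintegral_const_mul' _ _ ENNReal.ofReal_ne_top]
  refine setLIntegral_congr_fun measurableSet_Ioi fun x (hx : 0 < x) ↦ ?_
  rw [Pi.mul_apply, gammaPDF_of_nonneg hx.le, ← ENNReal.ofReal_mul (by positivity),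
    ← ENNReal.ofReal_mul (by positivity)]
  congr 1
  rw [show a + m - 1 = (a - 1) + m by ring, rpow_add hx, rpow_natCast, add_mul, neg_add, exp_add]
  ring

lemma lintegral_sq_pow_div_factorial_mul_exp_neg_mul_gammaMeasure {a t : ℝ} (ha : 0 < a)
    (ht : 0 ≤ t) (m : ℕ) :
    ∫⁻ x, ENNReal.ofReal ((x ^ 2) ^ m / m ! * exp (-(t * x))) ∂gammaMeasure a 1
      = ENNReal.ofReal ((1 / (1 + t)) ^ (a + 2 * m) * (Gamma (a + 2 * m) / (Gamma a * m !))) := by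
  calc ∫⁻ x, ENNReal.ofReal ((x ^ 2) ^ m / m ! * exp (-(t * x))) ∂gammaMeasure a 1
      = ∫⁻ x, ENNReal.ofReal (m ! : ℝ)⁻¹ * ENNReal.ofReal (x ^ (2 * m) * exp (-(t * x)))
          ∂gammaMeasure a 1 := by
        refine lintegral_congr fun x ↦ ?_
        rw [← ENNReal.ofReal_mul (by positivity), pow_mul, ← mul_assoc, ← div_eq_inv_mul]
    _ = _ := by
        rw [lintegral_const_mul' _ _ ENNReal.ofReal_ne_top,
          lintegral_pow_mul_exp_neg_mul_gammaMeasure ha one_pos ht,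
          ← ENNReal.ofReal_mul (by positivity)]
        congr 1
        push_cast
        rw [one_rpow]
        field_simp

lemma Finset.sum_pow_eq_factorial_mul_sum_piAntidiag {ι K : Type*} [DecidableEq ι] [Field K]
    [CharZero K] (s : Finset ι) (f : ι → K) (k : ℕ) :
    (∑ i ∈ s, f i) ^ k = k ! * ∑ v ∈ s.piAntidiag k, ∏ i ∈ s, f i ^ v i / (v i)! := by
  rw [sum_pow_eq_sum_piAntidiag, mul_sum]
  refine sum_congr rfl fun v hv ↦ ?_
  obtain ⟨hvk, -⟩ := mem_piAntidiag.mp hv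
  have hfac : (k ! : K) = (∏ i ∈ s, ((v i)! : K)) * Nat.multinomial s v := by
    rw [← hvk]; exact_mod_cast (Nat.multinomial_spec s v).symm
  rw [hfac, prod_div_distrib]
  have : ∏ i ∈ s, ((v i)! : K) ≠ 0 :=
    prod_ne_zero_iff.mpr fun i _ ↦ Nat.cast_ne_zero.mpr (Nat.factorial_ne_zero _)
  field_simp

lemma lintegral_ofReal_prod_of_iIndepFun {Ω ι : Type*} [MeasurableSpace Ω] {μ : Measure Ω}
    [Fintype ι] {X : ι → Ω → ℝ} (hmeas : ∀ i, Measurable (X i)) (hindep : iIndepFun X μ)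
    {g : ι → ℝ → ℝ} (hg : ∀ i, Measurable (g i)) (hg_nonneg : ∀ i x, 0 ≤ g i x) :
    ∫⁻ ω, ENNReal.ofReal (∏ i, g i (X i ω)) ∂μ
      = ∏ i, ∫⁻ x, ENNReal.ofReal (g i x) ∂(μ.map (X i)) := by
  simp_rw [ENNReal.ofReal_prod_of_nonneg fun i _ ↦ hg_nonneg i _]
  refine (lintegral_prod_eq_prod_lintegral_of_indepFun univ _
    (hindep.comp (fun i x ↦ ENNReal.ofReal (g i x)) fun i ↦ (hg i).ennreal_ofReal)
    fun i ↦ ((hg i).comp (hmeas i)).ennreal_ofReal).trans ?_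
  exact prod_congr rfl fun i _ ↦ (lintegral_map (hg i).ennreal_ofReal (hmeas i)).symm

lemma lintegral_sum_sq_pow_mul_exp_neg_mul_sum {Ω ι : Type*} [MeasurableSpace Ω]
    {μ : Measure Ω} [Fintype ι] [DecidableEq ι] {X : ι → Ω → ℝ} {a t : ℝ} (ha : 0 < a)
    (ht : 0 ≤ t) (hmeas : ∀ i, Measurable (X i)) (hindep : iIndepFun X μ)
    (hdist : ∀ i, μ.map (X i) = gammaMeasure a 1) (k : ℕ) :
    ∫⁻ ω, ENNReal.ofReal ((∑ i, X i ω ^ 2) ^ k * exp (-(t * ∑ i, X i ω))) ∂μ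
      = ENNReal.ofReal (k ! * (1 / (1 + t)) ^ (a * Fintype.card ι + 2 * k) *
          ∑ v ∈ (univ : Finset ι).piAntidiag k,
            ∏ i, Gamma (a + 2 * v i) / (Gamma a * (v i)!)) := by
  set g : ℕ → ℝ → ℝ := fun m x ↦ (x ^ 2) ^ m / m ! * exp (-(t * x))
  have hg_meas (m : ℕ) : Measurable (g m) := by fun_prop
  have hg_nonneg (m : ℕ) (x : ℝ) : 0 ≤ g m x := by positivity
  have hexpand (ω : Ω) : (∑ i, X i ω ^ 2) ^ k * exp (-(t * ∑ i, X i ω))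
      = k ! * ∑ v ∈ (univ : Finset ι).piAntidiag k, ∏ i, g (v i) (X i ω) := by
    rw [mul_sum, ← sum_neg_distrib, exp_sum, sum_pow_eq_factorial_mul_sum_piAntidiag, mul_assoc,
      sum_mul]
    simp only [g, prod_mul_distrib]
  have hfactor (m : ℕ) : ∫⁻ x, ENNReal.ofReal (g m x) ∂gammaMeasure a 1
      = ENNReal.ofReal ((1 / (1 + t)) ^ (a + 2 * m) * (Gamma (a + 2 * m) / (Gamma a * m !))) :=
    lintegral_sq_pow_div_factorial_mul_exp_neg_mul_gammaMeasure ha ht m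
  calc ∫⁻ ω, ENNReal.ofReal ((∑ i, X i ω ^ 2) ^ k * exp (-(t * ∑ i, X i ω))) ∂μ
      = ∫⁻ ω, ENNReal.ofReal (k !) *
          ∑ v ∈ (univ : Finset ι).piAntidiag k,
            ENNReal.ofReal (∏ i, g (v i) (X i ω)) ∂μ := by
        refine lintegral_congr fun ω ↦ ?_
        rw [hexpand, ENNReal.ofReal_mul (by positivity),
          ENNReal.ofReal_sum_of_nonneg fun v _ ↦ prod_nonneg fun i _ ↦ hg_nonneg _ _]
    _ = ENNReal.ofReal (k !) * ∑ v ∈ (univ : Finset ι).piAntidiag k,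
          ∏ i, ENNReal.ofReal ((1 / (1 + t)) ^ (a + 2 * v i) *
            (Gamma (a + 2 * v i) / (Gamma a * (v i)!))) := by
        rw [lintegral_const_mul' _ _ ENNReal.ofReal_ne_top,
          lintegral_finsetSum _ fun v _ ↦ by fun_prop]
        simp only [lintegral_ofReal_prod_of_iIndepFun hmeas hindep (fun i ↦ hg_meas _)
          (fun i ↦ hg_nonneg _), hdist, hfactor]
    _ = _ := by
        have hterm_nonneg (v : ι → ℕ) (i : ι) : 0 ≤ (1 / (1 + t)) ^ (a + 2 * v i) *
            (Gamma (a + 2 * v i) / (Gamma a * (v i)!)) := by positivity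
        simp_rw [← ENNReal.ofReal_prod_of_nonneg fun i _ ↦ hterm_nonneg _ i]
        rw [← ENNReal.ofReal_sum_of_nonneg fun v _ ↦ prod_nonneg fun i _ ↦ hterm_nonneg v i,
          ← ENNReal.ofReal_mul (by positivity), mul_assoc]
        congr 2
        rw [mul_sum]
        refine sum_congr rfl fun v hv ↦ ?_
        rw [prod_mul_distrib, ← rpow_sum_of_pos (by positivity), sum_add_distrib, ← mul_sum,
          ← Nat.cast_sum, (mem_piAntidiag.mp hv).1]
        simp [mul_comm]

lemma lintegral_sum_sq_div_sq_sum_pow {Ω ι : Type*} [MeasurableSpace Ω] {μ : Measure Ω}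
    [Fintype ι] [DecidableEq ι] [Nonempty ι] {X : ι → Ω → ℝ} {a : ℝ} (ha : 0 < a)
    (hmeas : ∀ i, Measurable (X i)) (hindep : iIndepFun X μ)
    (hdist : ∀ i, μ.map (X i) = gammaMeasure a 1) {k : ℕ} (hk : 0 < k) :
    ∫⁻ ω, ENNReal.ofReal (((∑ i, X i ω ^ 2) / (∑ i, X i ω) ^ 2) ^ k) ∂μ
      = ENNReal.ofReal (Gamma (a * Fintype.card ι) * k ! / Gamma (a * Fintype.card ι + 2 * k) *
          ∑ v ∈ (univ : Finset ι).piAntidiag k,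
            ∏ i, Gamma (a + 2 * v i) / (Gamma a * (v i)!)) := by
  set b : ℝ := a * Fintype.card ι
  set S : ℝ :=
    ∑ v ∈ (univ : Finset ι).piAntidiag k, ∏ i, Gamma (a + 2 * v i) / (Gamma a * (v i)!)
  have hb : 0 < b := by positivity
  have hS : 0 ≤ S := sum_nonneg fun v _ ↦ prod_nonneg fun i _ ↦ by positivity
  have hΓ : 0 < Gamma (2 * k) := Gamma_pos_of_pos (by positivity)
  have hpos : ∀ᵐ ω ∂μ, ∀ i, 0 < X i ω := ae_all_iff.mpr fun i ↦
    ae_of_ae_map (hmeas i).aemeasurable (hdist i ▸ ae_pos_gammaMeasure a 1)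
  have hinner (t : ℝ) (ht : 0 ≤ t) :
      ∫⁻ ω, ENNReal.ofReal ((∑ i, X i ω ^ 2) ^ k * exp (-(t * ∑ i, X i ω))) ∂μ
        = ENNReal.ofReal (k ! * (1 / (1 + t)) ^ (b + 2 * k) * S) :=
    lintegral_sum_sq_pow_mul_exp_neg_mul_sum ha ht hmeas hindep hdist k
  have : IsProbabilityMeasure μ := hindep.isProbabilityMeasure
  rw [← ENNReal.mul_right_inj (by simpa using hΓ) ENNReal.ofReal_ne_top,
    ← lintegral_const_mul' _ _ ENNReal.ofReal_ne_top]
  calc ∫⁻ ω, ENNReal.ofReal (Gamma (2 * k)) *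
        ENNReal.ofReal (((∑ i, X i ω ^ 2) / (∑ i, X i ω) ^ 2) ^ k) ∂μ
      = ∫⁻ ω, (∫⁻ t in Ioi 0, ENNReal.ofReal (t ^ (2 * k - 1 : ℝ) *
            ((∑ i, X i ω ^ 2) ^ k * exp (-(t * ∑ i, X i ω))))) ∂μ := by
        refine lintegral_congr_ae ?_
        filter_upwards [hpos] with ω hω
        exact ofReal_Gamma_mul_ofReal_div_sq_pow_eq_lintegral
          (sum_pos (fun i _ ↦ hω i) univ_nonempty) (by positivity) hk
    _ = ∫⁻ t in Ioi 0, ENNReal.ofReal (t ^ (2 * k - 1 : ℝ) * (1 / (1 + t)) ^ (2 * k + b)) *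
          ENNReal.ofReal (k ! * S) := by
        rw [lintegral_lintegral_swap (by fun_prop)]
        refine setLIntegral_congr_fun measurableSet_Ioi fun t (ht : 0 < t) ↦ ?_
        simp only [ENNReal.ofReal_mul (rpow_nonneg ht.le (2 * k - 1 : ℝ))]
        rw [lintegral_const_mul' _ _ ENNReal.ofReal_ne_top, hinner t ht.le,
          ENNReal.ofReal_mul (by positivity), ENNReal.ofReal_mul (by positivity),
          ENNReal.ofReal_mul (by positivity), add_comm b]
        ring
    _ = _ := by
        rw [lintegral_mul_const' _ _ ENNReal.ofReal_ne_top,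
          lintegral_rpow_mul_one_div_one_add_rpow_Ioi (by positivity) hb,
          ← ENNReal.ofReal_mul (by positivity), ← ENNReal.ofReal_mul hΓ.le]
        rw [add_comm _ b]
        field_simp

/-- For every integer `k ≥ 0`,
`E[(Z/Y²)^k] = (Γ(αn) k!/Γ(αn+2k)) ∑_{k₁+⋯+kₙ=k} ∏ᵢ Γ(α+2kᵢ)/(Γ(α) kᵢ!)`. -/
theorem moments_U_sq
    {Ω : Type*} [MeasureSpace Ω] [IsProbabilityMeasure (ℙ : Measure Ω)]
    (n : ℕ) (hn : 2 ≤ n) (α : ℝ) (hα : 0 < α)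
    (X : Fin n → Ω → ℝ) (hmeas : ∀ i, Measurable (X i))
    (hindep : iIndepFun X ℙ)
    (hdist : ∀ i, Measure.map (X i) ℙ = gammaMeasure α 1)
    (Y Z : Ω → ℝ) (hY : Y = fun ω => ∑ i, X i ω) (hZ : Z = fun ω => ∑ i, (X i ω) ^ 2)
    (k : ℕ) :
    ∫ ω, (Z ω / (Y ω) ^ 2) ^ k ∂ℙ
      = Real.Gamma (α * n) * k.factorial / Real.Gamma (α * n + 2 * k) *
          ∑ v ∈ Finset.Nat.antidiagonalTuple n k,
            ∏ i, Real.Gamma (α + 2 * v i) / (Real.Gamma α * (v i).factorial) := by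
  subst hY hZ
  have : Nonempty (Fin n) := ⟨⟨0, by omega⟩⟩
  have hαn : 0 < α * n := by positivity
  rcases Nat.eq_zero_or_pos k with rfl | hk
  · simp [Finset.Nat.antidiagonalTuple_zero_right, (Gamma_pos_of_pos hα).ne',
      (Gamma_pos_of_pos hαn).ne']
  rw [integral_eq_lintegral_of_nonneg_ae (ae_of_all _ fun ω ↦ by positivity)
      (by fun_prop : Measurable _).aestronglyMeasurable,
    lintegral_sum_sq_div_sq_sum_pow hα hmeas hindep hdist hk,
    ENNReal.toReal_ofReal (by positivity),
    Fintype.card_fin, piAntidiag_univ_fin_eq_antidiagonalTuple]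
end

section
/- Let β > 0 and let G_β(x) = ∫_0^x ξ^{β−1} e^{−ξ} dξ / Γ(β) be the gamma CDF. Then for all y, z > 0 and every integer j ≥ 0, (−1)^j · (∂/∂y)^j G_β(√(z/y)) = (Γ(β + 2j)/Γ(β)) · (∂/∂z)^j G_{β+2j}(√(z/y)), where the derivatives are the j-th partial derivatives with respect to y and to z respectively. -/
open MeasureTheory Real

/-- The gamma(β,1) CDF `G_β(x) = ∫_0^x ξ^(β-1) e^(-ξ) dξ / Γ(β)`. -/
noncomputable def gammaCDF (β x : ℝ) : ℝ :=
  (∫ ξ in (0:ℝ)..x, ξ ^ (β - 1) * Real.exp (-ξ)) / Real.Gamma β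

/-!
Let `ψ_γ(t) = ∫_0^√t ξ^(γ-1) e^(-ξ) dξ = Γ(γ) G_γ(√t)` (`lowerGammaSqrt γ t` below). Then
`ψ_γ'(t) = √t^γ e^(-√t) / (2t)`, hence `ψ_{γ+2}' = t ψ_γ'` and, by Leibniz,
`ψ_{γ+2}^(n+1) = t ψ_γ^(n+1) + n ψ_γ^(n)`. This is exactly the expression produced by
differentiating `y ↦ y^(-n) h(z/y)` once more in `y`, so induction on `j` gives
`∂_y^j ψ_β(z/y) = (-1)^j y^(-j) ψ_{β+2j}^(j)(z/y)`, while the chain rule gives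
`∂_z^j ψ_{β+2j}(z/y) = y^(-j) ψ_{β+2j}^(j)(z/y)`.
-/

open Filter Set Topology
open scoped ContDiff

theorem ContDiffOn.differentiableAt_iteratedDeriv {𝕜 E : Type*} [NontriviallyNormedField 𝕜]
    [NormedAddCommGroup E] [NormedSpace 𝕜 E] {f : 𝕜 → E} {s : Set 𝕜} {x : 𝕜} {n : WithTop ℕ∞}
    {m : ℕ} (hf : ContDiffOn 𝕜 n f s) (hs : IsOpen s) (hx : x ∈ s) (hmn : m < n) :
    DifferentiableAt 𝕜 (iteratedDeriv m f) x :=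
  ((hf.differentiableOn_iteratedDerivWithin hmn hs.uniqueDiffOn).congr
    fun _ hy => (iteratedDerivWithin_of_isOpen hs hy).symm).differentiableAt (hs.mem_nhds hx)

theorem iteratedDeriv_mul_deriv {𝕜 : Type*} [NontriviallyNormedField 𝕜] {F : 𝕜 → 𝕜} {x : 𝕜}
    {n : ℕ} (hF : ContDiffAt 𝕜 (n + 1) F x) :
    iteratedDeriv n (fun t => t * deriv F t) x
      = x * iteratedDeriv (n + 1) F x + n * iteratedDeriv n F x := by
  rw [iteratedDeriv_fun_mul (f := fun t => t) contDiffAt_id (hF.derivWithin le_rfl)]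
  rcases n with _ | n
  · simp
  · rw [iteratedDeriv_succ' (f := F), iteratedDeriv_succ' (n := n) (f := F),
      Finset.sum_range_succ', Finset.sum_range_succ',
      Finset.sum_eq_zero fun i _ => by simp [iteratedDeriv_fun_id]]
    simp only [zero_add, Nat.choose_one_right, Nat.cast_add, Nat.cast_one, iteratedDeriv_fun_id,
      one_ne_zero, ↓reduceIte, mul_one, add_tsub_cancel_right, Nat.choose_zero_right, one_mul,
      tsub_zero]
    ring

theorem iteratedDeriv_comp_div_const {F : ℝ → ℝ} {n : ℕ} (hF : ContDiffOn ℝ n F (Ioi 0))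
    {y z : ℝ} (hy : 0 < y) (hz : 0 < z) :
    iteratedDeriv n (fun z' => F (z' / y)) z = iteratedDeriv n F (z / y) / y ^ n := by
  have hmaps : MapsTo (y⁻¹ * ·) (Ioi 0) (Ioi 0) := fun _ ht => mul_pos (inv_pos.2 hy) ht
  have h := iteratedDerivWithin_comp_const_smul (mem_Ioi.2 hz) (uniqueDiffOn_Ioi 0) hF y⁻¹ hmaps
  rw [iteratedDerivWithin_of_isOpen isOpen_Ioi hz,
    iteratedDerivWithin_of_isOpen isOpen_Ioi (hmaps hz)] at h
  simpa [div_eq_mul_inv, mul_comm] using h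

theorem hasDerivAt_comp_const_div_div_pow {𝕜 : Type*} [NontriviallyNormedField 𝕜] {h : 𝕜 → 𝕜}
    {y z : 𝕜} (hy : y ≠ 0) (hh : DifferentiableAt 𝕜 h (z / y)) (n : ℕ) :
    HasDerivAt (fun y' => h (z / y') / y' ^ n)
      (-(z / y * deriv h (z / y) + n * h (z / y)) / y ^ (n + 1)) y := by
  have hdiv : HasDerivAt (fun y' => z / y') (-(z / y ^ 2)) y := by
    simpa [div_eq_mul_inv] using (hasDerivAt_inv hy).const_mul z
  refine ((hh.hasDerivAt.comp y hdiv).div (hasDerivAt_pow n y) (pow_ne_zero n hy)).congr_deriv ?_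
  rw [Function.comp_apply]
  rcases n with _ | n
  · field_simp
    ring
  · rw [Nat.add_sub_cancel]
    field_simp
    ring

noncomputable def lowerGammaSqrt (γ t : ℝ) : ℝ :=
  ∫ ξ in (0:ℝ)..√t, ξ ^ (γ - 1) * exp (-ξ)

theorem continuousAt_rpow_mul_exp_neg (γ : ℝ) {ξ : ℝ} (hξ : ξ ≠ 0) :
    ContinuousAt (fun ξ : ℝ => ξ ^ γ * exp (-ξ)) ξ :=
  (continuousAt_rpow_const _ _ (Or.inl hξ)).mul (by fun_prop)

theorem hasDerivAt_lowerGammaSqrt {γ t : ℝ} (hγ : 0 < γ) (ht : 0 < t) :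
    HasDerivAt (lowerGammaSqrt γ) (√t ^ γ * exp (-√t) / (2 * t)) t := by
  have hst : 0 < √t := sqrt_pos.2 ht
  have hint : IntervalIntegrable (fun ξ : ℝ => ξ ^ (γ - 1) * exp (-ξ)) volume 0 √t :=
    (intervalIntegral.intervalIntegrable_rpow' (by linarith)).mul_continuousOn
      (continuous_exp.comp continuous_neg).continuousOn
  have hmeas : StronglyMeasurableAtFilter (fun ξ : ℝ => ξ ^ (γ - 1) * exp (-ξ)) (𝓝 (√t)) :=
    ContinuousOn.stronglyMeasurableAtFilter isOpen_Ioi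
      (fun ξ hξ => (continuousAt_rpow_mul_exp_neg _ (mem_Ioi.1 hξ).ne').continuousWithinAt) _ hst
  refine ((intervalIntegral.integral_hasDerivAt_right hint hmeas
    (continuousAt_rpow_mul_exp_neg _ hst.ne')).comp t (hasDerivAt_sqrt ht.ne')).congr_deriv ?_
  rw [rpow_sub_one hst.ne']
  field_simp
  rw [sq_sqrt ht.le]

theorem contDiffOn_lowerGammaSqrt {γ : ℝ} (hγ : 0 < γ) :
    ContDiffOn ℝ ∞ (lowerGammaSqrt γ) (Ioi 0) := by
  rw [contDiffOn_infty_iff_deriv_of_isOpen isOpen_Ioi]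
  refine ⟨fun t ht => (hasDerivAt_lowerGammaSqrt hγ ht).differentiableAt.differentiableWithinAt,
    ?_⟩
  refine ContDiffOn.congr (f := fun t => √t ^ γ * exp (-√t) / (2 * t)) ?_
    fun t ht => (hasDerivAt_lowerGammaSqrt hγ ht).deriv
  intro t (ht : 0 < t)
  have hsqrt : ContDiffAt ℝ ∞ (fun t : ℝ => √t) t := contDiffAt_sqrt ht.ne'
  have hpow : ContDiffAt ℝ ∞ (fun t : ℝ => √t ^ γ) t :=
    (contDiffAt_rpow_const_of_ne (sqrt_pos.2 ht).ne').comp t hsqrt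
  exact ((hpow.mul (contDiff_exp.contDiffAt.comp t hsqrt.neg)).div
    (contDiffAt_const.mul contDiffAt_id) (by positivity)).contDiffWithinAt

theorem deriv_lowerGammaSqrt_add_two {γ t : ℝ} (hγ : 0 < γ) (ht : 0 < t) :
    deriv (lowerGammaSqrt (γ + 2)) t = t * deriv (lowerGammaSqrt γ) t := by
  rw [(hasDerivAt_lowerGammaSqrt (by linarith) ht).deriv, (hasDerivAt_lowerGammaSqrt hγ ht).deriv,
    rpow_add (sqrt_pos.2 ht), rpow_two, sq_sqrt ht.le]
  ring

theorem iteratedDeriv_succ_lowerGammaSqrt_add_two {γ t : ℝ} (hγ : 0 < γ) (ht : 0 < t) (n : ℕ) :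
    iteratedDeriv (n + 1) (lowerGammaSqrt (γ + 2)) t
      = t * iteratedDeriv (n + 1) (lowerGammaSqrt γ) t
        + n * iteratedDeriv n (lowerGammaSqrt γ) t := by
  have hderiv : deriv (lowerGammaSqrt (γ + 2)) =ᶠ[𝓝 t] fun s => s * deriv (lowerGammaSqrt γ) s :=
    eventually_of_mem (Ioi_mem_nhds ht) fun s hs => deriv_lowerGammaSqrt_add_two hγ hs
  rw [iteratedDeriv_succ', hderiv.iteratedDeriv_eq, iteratedDeriv_mul_deriv
    (((contDiffOn_lowerGammaSqrt hγ).contDiffAt (Ioi_mem_nhds ht)).of_le (mod_cast le_top))]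

theorem iteratedDeriv_lowerGammaSqrt_comp_const_div {γ y z : ℝ} (hγ : 0 < γ) (hy : 0 < y)
    (hz : 0 < z) (j : ℕ) :
    iteratedDeriv j (fun y' => lowerGammaSqrt γ (z / y')) y
      = (-1) ^ j * iteratedDeriv j (lowerGammaSqrt (γ + 2 * j)) (z / y) / y ^ j := by
  induction j generalizing y with
  | zero => simp
  | succ j ih =>
    have hγj : 0 < γ + 2 * j := by positivity
    have hIH : iteratedDeriv j (fun y' => lowerGammaSqrt γ (z / y')) =ᶠ[𝓝 y]
        fun y' => (-1) ^ j * (iteratedDeriv j (lowerGammaSqrt (γ + 2 * j)) (z / y') / y' ^ j) :=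
      eventually_of_mem (Ioi_mem_nhds hy) fun y' hy' => (ih hy').trans (mul_div_assoc _ _ _)
    have hdiff : DifferentiableAt ℝ (iteratedDeriv j (lowerGammaSqrt (γ + 2 * j))) (z / y) :=
      (contDiffOn_lowerGammaSqrt hγj).differentiableAt_iteratedDeriv isOpen_Ioi (div_pos hz hy)
        (mod_cast WithTop.coe_lt_top _)
    have hstep := hasDerivAt_comp_const_div_div_pow hy.ne' hdiff j
    rw [iteratedDeriv_succ, hIH.deriv_eq, deriv_const_mul _ hstep.differentiableAt, hstep.deriv,
      ← iteratedDeriv_succ, show γ + 2 * ((j + 1 : ℕ) : ℝ) = γ + 2 * j + 2 by push_cast; ring,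
      iteratedDeriv_succ_lowerGammaSqrt_add_two hγj (div_pos hz hy)]
    ring

/-- **identity (A.4).** For `β > 0`, all `y, z > 0` and every `j ≥ 0`,
`(-1)^j (∂/∂y)^j G_β(√(z/y)) = (Γ(β+2j)/Γ(β)) (∂/∂z)^j G_{β+2j}(√(z/y))`. -/
theorem gammaCDF_deriv_identity
    (β : ℝ) (hβ : 0 < β) (y z : ℝ) (hy : 0 < y) (hz : 0 < z) (j : ℕ) :
    (-1 : ℝ) ^ j * iteratedDeriv j (fun y' => gammaCDF β (Real.sqrt (z / y'))) y
      = Real.Gamma (β + 2 * j) / Real.Gamma β *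
          iteratedDeriv j (fun z' => gammaCDF (β + 2 * j) (Real.sqrt (z' / y))) z := by
  have hβj : 0 < β + 2 * j := by positivity
  have hcdf (γ t : ℝ) : gammaCDF γ (√t) = lowerGammaSqrt γ t / Gamma γ := rfl
  simp only [hcdf, iteratedDeriv_div_const]
  rw [iteratedDeriv_lowerGammaSqrt_comp_const_div hβ hy hz, iteratedDeriv_comp_div_const
    ((contDiffOn_lowerGammaSqrt hβj).of_le (mod_cast le_top)) hy hz]
  have hΓ : Gamma (β + 2 * j) ≠ 0 := (Gamma_pos_of_pos hβj).ne'
  field_simp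
  rw [← pow_mul, pow_mul', neg_one_sq, one_pow, one_mul]
end
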